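/- Let L be the τ-pinball loss and Q a probability measure on ℝ with support in [−1,1] having a τ-quantile of type q ∈ [1,∞) with constants α_Q ∈ (0,2] and b_Q > 0, and γ_Q = b_Q·α_Q^(q−1). Then for all ε ∈ [0,2], the self-calibration function satisfies δ(ε) := inf{C_Q(t) − C*_Q : dist(t, [t*_min,t*_max]) ≥ ε} ≥ q^(−1)·2^(1−q)·γ_Q·ε^q. -/

import Mathlib

open MeasureTheory Set

/-- The τ-pinball loss. -/
noncomputable def pinball (τ y t : ℝ) : ℝ := if y < t then (1 - τ) * (t - y) else τ * (y - t)

/-- The τ-quantile set F*_τ(Q). -/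
def quantileSet (Q : Measure ℝ) (τ : ℝ) : Set ℝ :=
  {t | τ ≤ (Q (Set.Iic t)).toReal ∧ 1 - τ ≤ (Q (Set.Ici t)).toReal}

noncomputable def tqmin (Q : Measure ℝ) (τ : ℝ) : ℝ := sInf (quantileSet Q τ)
noncomputable def tqmax (Q : Measure ℝ) (τ : ℝ) : ℝ := sSup (quantileSet Q τ)

/-- The inner pinball risk C_Q(t). -/
noncomputable def innerRisk (Q : Measure ℝ) (τ t : ℝ) : ℝ := ∫ y, pinball τ y t ∂Q

/-- `Q` has a τ-quantile of type `q` with constants `α ∈ (0,2]` and `b > 0`. -/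
noncomputable def quantileTypeQ (Q : Measure ℝ) (τ q α b : ℝ) : Prop :=
  (1 < q ∧ α ∈ Set.Ioc (0:ℝ) 2 ∧ 0 < b ∧
    ∀ s ∈ Set.Icc (0:ℝ) α,
      b * s ^ (q - 1) ≤ (Q (Set.Ioo (tqmin Q τ - s) (tqmin Q τ))).toReal ∧
      b * s ^ (q - 1) ≤ (Q (Set.Ioo (tqmax Q τ) (tqmax Q τ + s))).toReal)
  ∨ (q = 1 ∧ α = 2 ∧ 0 < (Q {tqmin Q τ}).toReal ∧ 0 < (Q {tqmax Q τ}).toReal ∧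
      b = (if tqmin Q τ ≠ tqmax Q τ
            then min (Q {tqmin Q τ}).toReal (Q {tqmax Q τ}).toReal
            else min (τ - (Q (Set.Iio (tqmin Q τ))).toReal)
                     ((Q (Set.Iic (tqmax Q τ))).toReal - τ)))

/-!
For `t` to the right of the upper quantile `d`,
`C_Q(t) - C_Q(d) = (t - d) (Q((-∞, d]) - τ) + ∫_{(d, ∞)} (t - y)⁺ dQ(y)`.
For type `q = 1` the first term is at least `b ε`. For `q > 1` the layer-cake formula turns the
second term into `∫₀^ε Q((d, d + v)) dv`; since `α v / 2 ≤ min v α` for `v ≤ 2`, the type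
condition bounds the integrand below by `b (α v / 2)^(q - 1)`, whose integral is the claimed
constant. Points to the left of the lower quantile reduce to this case by reflecting `Q` through
`y ↦ -y` and replacing `τ` by `1 - τ`, which exchanges the two ends of the quantile interval.
-/

open ProbabilityTheory

section Pinball

variable {τ y t : ℝ}

lemma pinball_eq_max (τ y t : ℝ) :
    pinball τ y t = (1 - τ) * max (t - y) 0 + τ * max (y - t) 0 := by
  unfold pinball
  split_ifs with h
  · rw [max_eq_left (by linarith), max_eq_right (by linarith)]; ring
  · rw [max_eq_right (by linarith), max_eq_left (by linarith)]; ring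

lemma pinball_nonneg (hτ : τ ∈ Icc (0 : ℝ) 1) : 0 ≤ pinball τ y t := by
  rw [pinball_eq_max]
  exact add_nonneg (mul_nonneg (sub_nonneg.2 hτ.2) (le_max_right _ _))
    (mul_nonneg hτ.1 (le_max_right _ _))

lemma pinball_neg (τ y t : ℝ) : pinball (1 - τ) (-y) (-t) = pinball τ y t := by
  simp only [pinball_eq_max, neg_sub_neg]
  ring

lemma pinball_sub_pinball {d : ℝ} (hdt : d ≤ t) :
    pinball τ y t - pinball τ y d =
      (t - d) * ((Iic d).indicator 1 y - τ) + (Ioi d).indicator (fun y => max (t - y) 0) y := by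
  rcases le_or_gt y d with hyd | hyd
  · have hyt : y ≤ t := hyd.trans hdt
    simp only [pinball_eq_max, indicator_of_mem (mem_Iic.2 hyd),
      indicator_of_notMem (notMem_Ioi.2 hyd), Pi.one_apply, max_eq_left (sub_nonneg.2 hyt),
      max_eq_left (sub_nonneg.2 hyd), max_eq_right (sub_nonpos.2 hyt),
      max_eq_right (sub_nonpos.2 hyd)]
    ring
  · simp only [pinball_eq_max, indicator_of_notMem (notMem_Iic.2 hyd),
      indicator_of_mem (mem_Ioi.2 hyd), max_eq_right (sub_nonpos.2 hyd.le),
      max_eq_left (sub_nonneg.2 hyd.le)]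
    rcases le_total t y with hty | hyt
    · rw [max_eq_right (sub_nonpos.2 hty), max_eq_left (sub_nonneg.2 hty)]; ring
    · rw [max_eq_left (sub_nonneg.2 hyt), max_eq_right (sub_nonpos.2 hyt)]; ring

lemma measurable_pinball (τ t : ℝ) : Measurable fun y => pinball τ y t := by
  simp only [pinball_eq_max]
  fun_prop

end Pinball

section InnerRisk

variable {P : Measure ℝ} {τ t : ℝ}

instance {G : Type*} [MeasurableSpace G] [Neg G] [MeasurableNeg G] (μ : Measure G)
    [IsProbabilityMeasure μ] : IsProbabilityMeasure μ.neg :=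
  Measure.isProbabilityMeasure_map measurable_neg.aemeasurable

lemma integrable_id_neg (hP : Integrable id P) : Integrable id P.neg :=
  (integrable_map_equiv (MeasurableEquiv.neg ℝ) id).2 hP.neg

lemma integrable_max_sub [IsFiniteMeasure P] (hP : Integrable id P) (t : ℝ) :
    Integrable (fun y => max (t - y) 0) P :=
  ((integrable_const t).sub hP).pos_part

lemma integrable_pinball [IsFiniteMeasure P] (hP : Integrable id P) (τ t : ℝ) :
    Integrable (fun y => pinball τ y t) P := by
  simp only [pinball_eq_max]
  exact ((integrable_max_sub hP t).const_mul _).add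
    ((hP.sub (integrable_const t)).pos_part.const_mul _)

lemma bddBelow_range_innerRisk (hτ : τ ∈ Icc (0 : ℝ) 1) :
    BddBelow (range fun s => innerRisk P τ s) :=
  ⟨0, forall_mem_range.2 fun _ => integral_nonneg fun _ => pinball_nonneg hτ⟩

lemma innerRisk_neg (P : Measure ℝ) (τ t : ℝ) :
    innerRisk P.neg (1 - τ) (-t) = innerRisk P τ t := by
  simp only [innerRisk, Measure.neg_def]
  rw [integral_map measurable_neg.aemeasurable (measurable_pinball _ _).aestronglyMeasurable]
  simp only [pinball_neg]

lemma innerRisk_sub_innerRisk [IsProbabilityMeasure P] (hP : Integrable id P) {d : ℝ}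
    (hdt : d ≤ t) :
    innerRisk P τ t - innerRisk P τ d =
      (t - d) * ((P (Iic d)).toReal - τ) + ∫ y in Ioi d, max (t - y) 0 ∂P := by
  rw [innerRisk, innerRisk,
    ← integral_sub (integrable_pinball hP τ t) (integrable_pinball hP τ d)]
  simp only [pinball_sub_pinball hdt]
  have hIic : Integrable (fun y => (Iic d).indicator (1 : ℝ → ℝ) y) P :=
    (integrable_const 1).indicator measurableSet_Iic
  have hlin : Integrable (fun y => (t - d) * ((Iic d).indicator 1 y - τ)) P :=
    (hIic.sub (integrable_const τ)).const_mul _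
  rw [integral_add hlin ((integrable_max_sub hP t).indicator measurableSet_Ioi),
    integral_const_mul, integral_sub hIic (integrable_const τ),
    integral_indicator_one measurableSet_Iic, integral_indicator measurableSet_Ioi, integral_const,
    probReal_univ, one_smul, measureReal_def]

end InnerRisk

section Quantile

variable {P : Measure ℝ} {τ : ℝ}

lemma le_cdf_csInf {A : Set ℝ} (hne : A.Nonempty) (hbdd : BddBelow A)
    (hA : ∀ x ∈ A, τ ≤ cdf P x) : τ ≤ cdf P (sInf A) := by
  have hcont : ContinuousWithinAt (cdf P) A (sInf A) :=
    ((cdf P).right_continuous _).mono fun x hx => csInf_le hbdd hx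
  exact closure_minimal (image_subset_iff.2 hA) isClosed_Ici
    (hcont.mem_closure_image (csInf_mem_closure hne hbdd))

lemma bddBelow_setOf_le_cdf (hτ : 0 < τ) : BddBelow {x | τ ≤ cdf P x} := by
  obtain ⟨x₀, hx₀⟩ :=
    ((tendsto_cdf_atBot (μ := P)).eventually (eventually_lt_nhds hτ)).exists_forall_of_atBot
  exact ⟨x₀, fun x hx => le_of_not_gt fun hlt => (hx₀ x hlt.le).not_ge hx⟩

lemma quantileSet_subset_setOf_le_cdf [IsProbabilityMeasure P] :
    quantileSet P τ ⊆ {x | τ ≤ cdf P x} := fun x hx => by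
  simpa [cdf_eq_real, measureReal_def] using hx.1

lemma bddBelow_quantileSet [IsProbabilityMeasure P] (hτ : 0 < τ) : BddBelow (quantileSet P τ) :=
  (bddBelow_setOf_le_cdf hτ).mono quantileSet_subset_setOf_le_cdf

lemma quantileSet_nonempty [IsProbabilityMeasure P] (hτ : τ ∈ Ioo (0 : ℝ) 1) :
    (quantileSet P τ).Nonempty := by
  set L := {x | τ ≤ cdf P x}
  have hne : L.Nonempty :=
    ((tendsto_cdf_atTop (μ := P)).eventually (eventually_ge_nhds hτ.2)).exists
  have hbdd : BddBelow L := bddBelow_setOf_le_cdf hτ.1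
  have hleft : Function.leftLim (cdf P) (sInf L) ≤ τ :=
    le_of_tendsto ((cdf P).mono.tendsto_leftLim _) (eventually_nhdsWithin_of_forall fun x hx =>
      le_of_lt (not_le.1 fun h => (not_le.2 hx) (csInf_le hbdd h)))
  have hIio : P (Iio (sInf L)) = ENNReal.ofReal (Function.leftLim (cdf P) (sInf L)) := by
    have := (cdf P).measure_Iio (tendsto_cdf_atBot P) (sInf L)
    rwa [measure_cdf, sub_zero] at this
  refine ⟨sInf L, ?_, ?_⟩
  · simpa [cdf_eq_real, measureReal_def] using le_cdf_csInf hne hbdd fun x hx => hx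
  · rw [← compl_Iio, ← measureReal_def, probReal_compl_eq_one_sub measurableSet_Iio,
      measureReal_def, hIio, ENNReal.toReal_ofReal']
    linarith [max_le hleft hτ.1.le]

lemma tqmin_mem_quantileSet [IsProbabilityMeasure P] (hτ : τ ∈ Ioo (0 : ℝ) 1) :
    tqmin P τ ∈ quantileSet P τ := by
  obtain ⟨x, hx⟩ := quantileSet_nonempty (P := P) hτ
  have hbdd := bddBelow_quantileSet (P := P) hτ.1
  refine ⟨?_, hx.2.trans (ENNReal.toReal_mono (measure_ne_top _ _)
    (measure_mono (Ici_subset_Ici.2 (csInf_le hbdd hx))))⟩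
  simpa [tqmin, cdf_eq_real, measureReal_def] using
    le_cdf_csInf ⟨x, hx⟩ hbdd fun y hy => quantileSet_subset_setOf_le_cdf hy

lemma quantileSet_neg (P : Measure ℝ) (τ : ℝ) :
    quantileSet P.neg (1 - τ) = -quantileSet P τ := by
  ext x
  simp only [quantileSet, mem_ofPred_eq, Set.mem_neg, Measure.neg_apply, neg_Iic, neg_Ici,
    sub_sub_cancel]
  exact and_comm

lemma tqmin_neg (P : Measure ℝ) (τ : ℝ) : tqmin P.neg (1 - τ) = -tqmax P τ := by
  rw [tqmin, quantileSet_neg, Real.sInf_neg, tqmax]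

lemma tqmax_neg (P : Measure ℝ) (τ : ℝ) : tqmax P.neg (1 - τ) = -tqmin P τ := by
  rw [tqmax, quantileSet_neg, Real.sSup_neg, tqmin]

lemma tqmax_mem_quantileSet [IsProbabilityMeasure P] (hτ : τ ∈ Ioo (0 : ℝ) 1) :
    tqmax P τ ∈ quantileSet P τ := by
  have := tqmin_mem_quantileSet (P := P.neg) (τ := 1 - τ)
    ⟨by linarith [hτ.2], by linarith [hτ.1]⟩
  rwa [tqmin_neg, quantileSet_neg, Set.neg_mem_neg] at this

lemma tqmin_le_tqmax [IsProbabilityMeasure P] (hτ : τ ∈ Ioo (0 : ℝ) 1) :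
    tqmin P τ ≤ tqmax P τ :=
  csInf_le (bddBelow_quantileSet hτ.1) (tqmax_mem_quantileSet hτ)

lemma quantileTypeQ.neg [IsProbabilityMeasure P] {q α b : ℝ} (h : quantileTypeQ P τ q α b) :
    quantileTypeQ P.neg (1 - τ) q α b := by
  unfold quantileTypeQ at h ⊢
  simp only [tqmin_neg, tqmax_neg, Measure.neg_apply, neg_Ioo, neg_singleton, neg_Iio, neg_Iic,
    neg_neg, neg_inj, ne_eq]
  rcases h with ⟨hq, hα, hb, hmass⟩ | ⟨hq, hα, hc, hd, hb⟩
  · refine Or.inl ⟨hq, hα, hb, fun s hs => ?_⟩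
    rw [show -(-tqmax P τ - s) = tqmax P τ + s by ring,
      show -(-tqmin P τ + s) = tqmin P τ - s by ring]
    exact (hmass s hs).symm
  · refine Or.inr ⟨hq, hα, hd, hc, ?_⟩
    rcases eq_or_ne (tqmin P τ) (tqmax P τ) with h | h
    · have hIoi : (P (Ioi (tqmax P τ))).toReal = 1 - (P (Iic (tqmax P τ))).toReal := by
        rw [← compl_Iic]; exact probReal_compl_eq_one_sub measurableSet_Iic
      have hIci : (P (Ici (tqmin P τ))).toReal = 1 - (P (Iio (tqmin P τ))).toReal := by
        rw [← compl_Iio]; exact probReal_compl_eq_one_sub measurableSet_Iio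
      rw [hb, if_neg (not_not.2 h), if_neg (not_not.2 h.symm), hIoi, hIci, min_comm]
      congr 1 <;> ring
    · rw [hb, if_pos h, if_pos h.symm, min_comm]

end Quantile

section ExcessRisk

variable {P : Measure ℝ} {q α b d ε : ℝ}

lemma le_integral_Ioi_max_sub [IsFiniteMeasure P] (hq : 0 < q) (hα : α ∈ Ioc (0 : ℝ) 2)
    (hε : ε ∈ Icc (0 : ℝ) 2)
    (hmass : ∀ s ∈ Icc (0 : ℝ) α, b * s ^ (q - 1) ≤ (P (Ioo d (d + s))).toReal) :
    q⁻¹ * 2 ^ (1 - q) * (b * α ^ (q - 1)) * ε ^ q ≤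
      ∫ y in Ioi d, max (d + ε - y) 0 ∂P := by
  obtain ⟨hα0, hα2⟩ := hα
  obtain ⟨hε0, hε2⟩ := hε
  set M : ℝ → ℝ := fun s => (P (Ioo d (d + ε - s))).toReal with hM
  have hM_anti : Antitone M := fun s s' hss' =>
    ENNReal.toReal_mono (measure_ne_top _ _) (measure_mono (Ioo_subset_Ioo_right (by linarith)))
  have hlayer : ∫ y in Ioi d, max (d + ε - y) 0 ∂P = ∫ s in (0)..ε, M s := by
    have hint : Integrable (fun y => max (d + ε - y) 0) (P.restrict (Ioi d)) := by
      refine Integrable.of_bound (by fun_prop) ε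
        ((ae_restrict_iff' measurableSet_Ioi).2 (ae_of_all _ fun y (hy : d < y) => ?_))
      rw [Real.norm_eq_abs, abs_of_nonneg (le_max_right _ _)]
      exact max_le (by linarith) hε0
    rw [hint.integral_eq_integral_meas_lt (ae_of_all _ fun y => le_max_right _ _),
      intervalIntegral.integral_of_le hε0,
      ← setIntegral_eq_of_subset_of_forall_sdiff_eq_zero measurableSet_Ioi Ioc_subset_Ioi_self]
    · refine setIntegral_congr_fun measurableSet_Ioi fun s (hs : 0 < s) => ?_
      have hlevel : {y | s < max (d + ε - y) 0} = Iio (d + ε - s) := by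
        ext y
        simp only [mem_ofPred_eq, mem_Iio, lt_max_iff, hs.not_gt, or_false]
        constructor <;> intro h <;> linarith
      rw [measureReal_def, hlevel, Measure.restrict_apply measurableSet_Iio, Iio_inter_Ioi]
    · rintro s ⟨hs, hsε⟩
      have hεs : ε < s := by simpa [mem_Ioc, mem_Ioi.1 hs] using hsε
      simp [hM, Ioo_eq_empty (show ¬ d < d + ε - s by linarith)]
  have hMge : ∀ s ∈ Icc (0 : ℝ) ε, b * (α / 2) ^ (q - 1) * (ε - s) ^ (q - 1) ≤ M s := by
    rintro s ⟨hs0, hsε⟩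
    have hu : α / 2 * (ε - s) ∈ Icc (0 : ℝ) α :=
      ⟨mul_nonneg (by positivity) (by linarith), by nlinarith⟩
    calc b * (α / 2) ^ (q - 1) * (ε - s) ^ (q - 1) = b * (α / 2 * (ε - s)) ^ (q - 1) := by
          rw [Real.mul_rpow (by positivity) (by linarith)]; ring
      _ ≤ (P (Ioo d (d + α / 2 * (ε - s)))).toReal := hmass _ hu
      _ ≤ M s := ENNReal.toReal_mono (measure_ne_top _ _)
          (measure_mono (Ioo_subset_Ioo_right (by nlinarith)))
  have hcalc : ∫ s in (0)..ε, b * (α / 2) ^ (q - 1) * (ε - s) ^ (q - 1) =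
      q⁻¹ * 2 ^ (1 - q) * (b * α ^ (q - 1)) * ε ^ q := by
    have hsub :=
      intervalIntegral.integral_comp_sub_left (fun x => x ^ (q - 1)) ε (a := 0) (b := ε)
    simp only [sub_self, sub_zero] at hsub
    rw [intervalIntegral.integral_const_mul, hsub, integral_rpow (Or.inl (by linarith)),
      sub_add_cancel, Real.zero_rpow hq.ne', sub_zero, Real.div_rpow hα0.le zero_le_two,
      show 1 - q = -(q - 1) by ring, Real.rpow_neg zero_le_two]
    field_simp
  have hint :
      IntervalIntegrable (fun s => b * (α / 2) ^ (q - 1) * (ε - s) ^ (q - 1)) volume 0 ε := by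
    have := (intervalIntegral.intervalIntegrable_rpow' (a := ε) (b := 0)
      (show -1 < q - 1 by linarith)).comp_sub_left ε
    simp only [sub_self, sub_zero] at this
    exact this.const_mul _
  calc q⁻¹ * 2 ^ (1 - q) * (b * α ^ (q - 1)) * ε ^ q
      = ∫ s in (0)..ε, b * (α / 2) ^ (q - 1) * (ε - s) ^ (q - 1) := hcalc.symm
    _ ≤ ∫ s in (0)..ε, M s :=
        intervalIntegral.integral_mono_on hε0 hint hM_anti.intervalIntegrable hMge
    _ = _ := hlayer.symm

end ExcessRisk

section ExcessRiskAtQuantile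

variable {P : Measure ℝ} [IsProbabilityMeasure P] {τ q α b ε t : ℝ}

lemma quantileTypeQ.le_measure_Iic_tqmax_sub (hτ : τ ∈ Ioo (0 : ℝ) 1)
    (h : quantileTypeQ P τ 1 α b) : b ≤ (P (Iic (tqmax P τ))).toReal - τ := by
  rcases h with ⟨hq, -⟩ | ⟨-, -, -, -, hb⟩
  · exact absurd hq (lt_irrefl 1)
  rcases eq_or_ne (tqmin P τ) (tqmax P τ) with hcd | hcd
  · rw [hb, if_neg (not_not.2 hcd)]
    exact min_le_right _ _
  · have hsplit : (P (Iic (tqmax P τ))).toReal =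
        (P (Iio (tqmax P τ))).toReal + (P {tqmax P τ}).toReal := by
      rw [← Iio_union_right]
      exact measureReal_union (μ := P) (disjoint_singleton_right.2 self_notMem_Iio)
        (measurableSet_singleton _)
    have hc : τ ≤ (P (Iio (tqmax P τ))).toReal :=
      (tqmin_mem_quantileSet hτ).1.trans (ENNReal.toReal_mono (measure_ne_top _ _)
        (measure_mono (Iic_subset_Iio.2 ((tqmin_le_tqmax hτ).lt_of_ne hcd))))
    rw [hb, if_pos hcd]
    linarith [min_le_right (P {tqmin P τ}).toReal (P {tqmax P τ}).toReal]

theorem quantileTypeQ.le_innerRisk_sub_innerRisk_tqmax (h : quantileTypeQ P τ q α b)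
    (hP : Integrable id P) (hτ : τ ∈ Ioo (0 : ℝ) 1) (hε : ε ∈ Icc (0 : ℝ) 2)
    (ht : tqmax P τ + ε ≤ t) :
    q⁻¹ * 2 ^ (1 - q) * (b * α ^ (q - 1)) * ε ^ q ≤
      innerRisk P τ t - innerRisk P τ (tqmax P τ) := by
  have hd : τ ≤ (P (Iic (tqmax P τ))).toReal := (tqmax_mem_quantileSet hτ).1
  have hdt : ε ≤ t - tqmax P τ := by linarith
  have hb_of_eq_one : q = 1 → b ≤ (P (Iic (tqmax P τ))).toReal - τ := by
    rintro rfl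
    exact h.le_measure_Iic_tqmax_sub hτ
  rw [innerRisk_sub_innerRisk hP (by linarith [hε.1])]
  rcases h with ⟨hq, hα, -, hmass⟩ | ⟨rfl, rfl, -⟩
  · have htail := le_integral_Ioi_max_sub (P := P) (by linarith) hα hε fun s hs => (hmass s hs).2
    have hmono : ∫ y in Ioi (tqmax P τ), max (tqmax P τ + ε - y) 0 ∂P ≤
        ∫ y in Ioi (tqmax P τ), max (t - y) 0 ∂P :=
      integral_mono_of_nonneg (ae_of_all _ fun _ => le_max_right _ _)
        (integrable_max_sub hP t).integrableOn
        (ae_of_all _ fun y => max_le_max (by linarith) le_rfl)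
    have hlin : 0 ≤ (t - tqmax P τ) * ((P (Iic (tqmax P τ))).toReal - τ) :=
      mul_nonneg (by linarith [hε.1]) (sub_nonneg.2 hd)
    linarith
  · have htail : 0 ≤ ∫ y in Ioi (tqmax P τ), max (t - y) 0 ∂P :=
      integral_nonneg fun _ => le_max_right _ _
    have hlin := mul_le_mul (hb_of_eq_one rfl) hdt hε.1 (sub_nonneg.2 hd)
    simp only [inv_one, sub_self, Real.rpow_zero, Real.rpow_one, one_mul, mul_one]
    linarith

theorem quantileTypeQ.le_innerRisk_sub_innerRisk_tqmin (h : quantileTypeQ P τ q α b)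
    (hP : Integrable id P) (hτ : τ ∈ Ioo (0 : ℝ) 1) (hε : ε ∈ Icc (0 : ℝ) 2)
    (ht : t + ε ≤ tqmin P τ) :
    q⁻¹ * 2 ^ (1 - q) * (b * α ^ (q - 1)) * ε ^ q ≤
      innerRisk P τ t - innerRisk P τ (tqmin P τ) := by
  have := h.neg.le_innerRisk_sub_innerRisk_tqmax (integrable_id_neg hP)
    ⟨by linarith [hτ.2], by linarith [hτ.1]⟩ hε (t := -t) (by rw [tqmax_neg]; linarith)
  rwa [tqmax_neg, innerRisk_neg, innerRisk_neg] at this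

end ExcessRiskAtQuantile

lemma add_le_or_le_sub_of_le_infDist_Icc {c d t ε : ℝ} (hcd : c ≤ d) (hε : 0 < ε)
    (h : ε ≤ Metric.infDist t (Icc c d)) : d + ε ≤ t ∨ t + ε ≤ c := by
  rcases lt_or_ge d t with hdt | htd
  · have := Metric.infDist_le_dist_of_mem (x := t) (right_mem_Icc.2 hcd)
    rw [Real.dist_eq, abs_of_pos (by linarith)] at this
    exact Or.inl (by linarith)
  rcases lt_or_ge t c with htc | hct
  · have := Metric.infDist_le_dist_of_mem (x := t) (left_mem_Icc.2 hcd)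
    rw [Real.dist_eq, abs_of_neg (by linarith)] at this
    exact Or.inr (by linarith)
  rw [Metric.infDist_zero_of_mem (mem_Icc.2 ⟨hct, htd⟩)] at h
  exact absurd h hε.not_ge

/-- Lower bound on the self-calibration function of the pinball loss for distributions with
τ-quantile of type `q`: every `t` at distance at least `ε` from the quantile interval has excess
inner risk at least `q⁻¹·2^(1−q)·γ_Q·ε^q`. -/
theorem stmt11 (τ q α b : ℝ) (hτ : τ ∈ Set.Ioo (0:ℝ) 1) (Q : Measure ℝ)
    [IsProbabilityMeasure Q] (hsupp : Q (Set.Icc (-1:ℝ) 1)ᶜ = 0)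
    (hq : 1 ≤ q) (htype : quantileTypeQ Q τ q α b) :
    ∀ ε ∈ Set.Icc (0:ℝ) 2, ∀ t : ℝ,
      ε ≤ Metric.infDist t (Set.Icc (tqmin Q τ) (tqmax Q τ)) →
      q⁻¹ * 2 ^ (1 - q) * (b * α ^ (q - 1)) * ε ^ q
        ≤ innerRisk Q τ t - (⨅ s : ℝ, innerRisk Q τ s) := by
  intro ε hε t ht
  have hP : Integrable id Q :=
    Integrable.of_bound measurable_id.aestronglyMeasurable 1
      ((ae_iff.2 hsupp).mono fun y hy => abs_le.2 hy)
  have hbdd := bddBelow_range_innerRisk (P := Q) (Ioo_subset_Icc_self hτ)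
  obtain rfl | hε₀ := hε.1.eq_or_lt
  · rw [Real.zero_rpow (by linarith), mul_zero, sub_nonneg]
    exact ciInf_le hbdd t
  rcases add_le_or_le_sub_of_le_infDist_Icc (tqmin_le_tqmax hτ) hε₀ ht with hdt | htc
  · exact (htype.le_innerRisk_sub_innerRisk_tqmax hP hτ hε hdt).trans
      (sub_le_sub_left (ciInf_le hbdd _) _)
  · exact (htype.le_innerRisk_sub_innerRisk_tqmin hP hτ hε htc).trans
      (sub_le_sub_left (ciInf_le hbdd _) _)
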